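/- arXiv:1904.04152 — 3 statements merged into one kernel-verified Lean document; each statement's English description precedes it below -/
import Mathlib

section
/- With the setup of the telescoping identity (finite S, A; deterministic model f; V⋆(s) = min_a Q⋆(s,a); modified stage cost L̂(s,a) = Q⋆(s,a) − γ V⋆(f(s,a))), the optimal N-step value V̂_N(s) := min over policies π of [γ^N V⋆(x_N^π) + Σ_{k=0}^{N−1} γ^k L̂(x_k^π, π(x_k^π))] equals V⋆(s) for every state s and every horizon N ≥ 1. -/
/-!
Along any trajectory the modified costs telescope: the terminal term and the sum of
`γ ^ k * L̂` add up to `V s` plus the discounted Bellman gaps `Q x_k a_k - V x_k`. These gaps are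
nonnegative because `V` is the pointwise minimum of `Q`, and they all vanish along the greedy
policy, which exists because `A` is finite.
-/

def traj {S A : Type} (f : S → A → S) (π : S → A) (s : S) : ℕ → S
  | 0 => s
  | n + 1 => f (traj f π s n) (π (traj f π s n))

section Telescoping

variable {S A : Type} (f : S → A → S) (π : S → A) (s : S)

@[simp]
theorem traj_zero : traj f π s 0 = s := rfl

theorem traj_succ (n : ℕ) :
    traj f π s (n + 1) = f (traj f π s n) (π (traj f π s n)) := rfl

theorem discounted_modified_cost_telescope (V : S → ℝ) (Q : S → A → ℝ) (γ : ℝ) (N : ℕ) :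
    γ ^ N * V (traj f π s N)
        + ∑ k ∈ Finset.range N, γ ^ k *
            (Q (traj f π s k) (π (traj f π s k)) - γ * V (f (traj f π s k) (π (traj f π s k))))
      = V s + ∑ k ∈ Finset.range N, γ ^ k *
            (Q (traj f π s k) (π (traj f π s k)) - V (traj f π s k)) := by
  induction N with
  | zero => simp
  | succ N ih =>
    rw [Finset.sum_range_succ, Finset.sum_range_succ, traj_succ]
    linear_combination ih

end Telescoping

theorem exists_greedy_policy {S A : Type} [Finite A] [Nonempty A] (Q : S → A → ℝ) :
    ∃ π : S → A, ∀ t, Q t (π t) = ⨅ a, Q t a := by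
  choose π hπ using fun t => exists_eq_ciInf_of_finite (f := Q t)
  exact ⟨π, hπ⟩

theorem optimal_N_step_value_eq_Vstar_general
    {S A : Type} [Fintype A] [Nonempty A]
    (f : S → A → S) (V : S → ℝ) (Q : S → A → ℝ)
    (hV : ∀ s, V s = ⨅ a, Q s a)
    (γ : ℝ) (hγ : 0 < γ)
    (Lhat : S → A → ℝ) (hL : ∀ s a, Lhat s a = Q s a - γ * V (f s a))
    (N : ℕ) (s : S) :
    (⨅ π : S → A,
      (γ ^ N * V (traj f π s N)
        + ∑ k ∈ Finset.range N, γ ^ k * Lhat (traj f π s k) (π (traj f π s k))))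
    = V s := by
  simp_rw [hL, discounted_modified_cost_telescope]
  have gap_nonneg : ∀ (π : S → A) k, 0 ≤ γ ^ k *
      (Q (traj f π s k) (π (traj f π s k)) - V (traj f π s k)) := fun π k => by
    rw [hV]
    exact mul_nonneg (pow_nonneg hγ.le k) (sub_nonneg.2 (ciInf_le (Finite.bddBelow_range _) _))
  obtain ⟨πgreedy, hgreedy⟩ := exists_greedy_policy Q
  refine IsGLB.ciInf_eq (IsLeast.isGLB ⟨⟨πgreedy, ?_⟩, ?_⟩)
  · simp [hgreedy, hV]
  · rintro _ ⟨π, rfl⟩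
    exact le_add_of_nonneg_right (Finset.sum_nonneg fun k _ => gap_nonneg π k)

theorem optimal_N_step_value_eq_Vstar
    {S A : Type} [Fintype S] [Fintype A] [Nonempty S] [Nonempty A]
    (f : S → A → S) (V : S → ℝ) (Q : S → A → ℝ)
    (hV : ∀ s, V s = ⨅ a, Q s a)
    (γ : ℝ) (hγ : 0 < γ) (hγ1 : γ ≤ 1)
    (Lhat : S → A → ℝ) (hL : ∀ s a, Lhat s a = Q s a - γ * V (f s a))
    (N : ℕ) (hN : 1 ≤ N) (s : S) :
    (⨅ π : S → A,
      (γ ^ N * V (traj f π s N)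
        + ∑ k ∈ Finset.range N, γ ^ k * Lhat (traj f π s k) (π (traj f π s k))))
    = V s :=
  optimal_N_step_value_eq_Vstar_general f V Q hV γ hγ Lhat hL N s
end

section
/- With the setup of the N-step modified-cost problem (finite S, A; deterministic model f; L̂(s,a) = Q⋆(s,a) − γ V⋆(f(s,a)); V⋆(s)=min_a Q⋆(s,a)), define Q̂_N(s,a) := L̂(s,a) + γ V̂_{N−1}(f(s,a)) where V̂_{N−1} is the optimal (N−1)-step modified value with terminal cost V⋆. Then Q̂_N(s,a) = Q⋆(s,a) for all (s,a) and all N ≥ 1. -/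
section ModifiedCost

variable {S A : Type} (f : S → A → S) (V : S → ℝ) (Q : S → A → ℝ) (γ : ℝ)

theorem modifiedReturn_eq_add_sum_gap (π : S → A) (s : S) (m : ℕ) :
    γ ^ m * V (traj f π s m) + ∑ k ∈ Finset.range m,
        γ ^ k * (Q (traj f π s k) (π (traj f π s k)) - γ * V (f (traj f π s k) (π (traj f π s k))))
      = V s + ∑ k ∈ Finset.range m,
        γ ^ k * (Q (traj f π s k) (π (traj f π s k)) - V (traj f π s k)) := by
  induction m with
  | zero => simp [traj]
  | succ m ih =>
    rw [Finset.sum_range_succ, Finset.sum_range_succ, traj]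
    linear_combination ih

theorem iInf_modifiedReturn_eq (hγ : 0 ≤ γ) (hVQ : ∀ s a, V s ≤ Q s a)
    {πg : S → A} (hπg : ∀ s, Q s (πg s) = V s) (m : ℕ) (s : S) :
    ⨅ π : S → A, (γ ^ m * V (traj f π s m) + ∑ k ∈ Finset.range m,
        γ ^ k * (Q (traj f π s k) (π (traj f π s k)) - γ * V (f (traj f π s k) (π (traj f π s k)))))
      = V s := by
  refine IsLeast.csInf_eq ⟨⟨πg, ?_⟩, ?_⟩
  · dsimp only
    rw [modifiedReturn_eq_add_sum_gap]
    simp [hπg]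
  · rintro _ ⟨π, rfl⟩
    dsimp only
    rw [modifiedReturn_eq_add_sum_gap, le_add_iff_nonneg_right]
    exact Finset.sum_nonneg fun k _ =>
      mul_nonneg (pow_nonneg hγ k) (sub_nonneg.mpr (hVQ _ _))

end ModifiedCost

theorem Qhat_eq_Qstar_general
    {S A : Type} [Fintype A] [Nonempty A]
    (f : S → A → S) (V : S → ℝ) (Q : S → A → ℝ)
    (hV : ∀ s, V s = ⨅ a, Q s a)
    (γ : ℝ) (hγ : 0 < γ)
    (Lhat : S → A → ℝ) (hL : ∀ s a, Lhat s a = Q s a - γ * V (f s a))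
    (Vhat : ℕ → S → ℝ)
    (hV0 : ∀ s, Vhat 0 s = V s)
    (hVm : ∀ m, 1 ≤ m → ∀ s, Vhat m s =
      ⨅ π : S → A,
        (γ ^ m * V (traj f π s m)
          + ∑ k ∈ Finset.range m, γ ^ k * Lhat (traj f π s k) (π (traj f π s k))))
    (N : ℕ) (s : S) (a : A) :
    Lhat s a + γ * Vhat (N - 1) (f s a) = Q s a := by
  have hVQ : ∀ s a, V s ≤ Q s a := fun s a => (hV s).symm ▸ ciInf_le (Finite.bddBelow_range _) a
  obtain ⟨πg, hπg⟩ : ∃ πg : S → A, ∀ s, Q s (πg s) = V s := by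
    choose πg hπg using fun s => exists_eq_ciInf_of_finite (f := Q s)
    exact ⟨πg, fun s => (hπg s).trans (hV s).symm⟩
  have hVhat : ∀ m s, Vhat m s = V s := by
    rintro (_ | m) s
    · exact hV0 s
    · simp_rw [hVm (m + 1) m.succ_pos, hL]
      exact iInf_modifiedReturn_eq f V Q γ hγ.le hVQ hπg (m + 1) s
  rw [hVhat, hL]
  ring

theorem Qhat_eq_Qstar
    {S A : Type} [Fintype S] [Fintype A] [Nonempty S] [Nonempty A]
    (f : S → A → S) (V : S → ℝ) (Q : S → A → ℝ)
    (hV : ∀ s, V s = ⨅ a, Q s a)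
    (γ : ℝ) (hγ : 0 < γ) (hγ1 : γ ≤ 1)
    (Lhat : S → A → ℝ) (hL : ∀ s a, Lhat s a = Q s a - γ * V (f s a))
    (Vhat : ℕ → S → ℝ)
    (hV0 : ∀ s, Vhat 0 s = V s)
    (hVm : ∀ m, 1 ≤ m → ∀ s, Vhat m s =
      ⨅ π : S → A,
        (γ ^ m * V (traj f π s m)
          + ∑ k ∈ Finset.range m, γ ^ k * Lhat (traj f π s k) (π (traj f π s k))))
    (N : ℕ) (hN : 1 ≤ N) (s : S) (a : A) :
    Lhat s a + γ * Vhat (N - 1) (f s a) = Q s a :=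
  Qhat_eq_Qstar_general f V Q hV γ hγ Lhat hL Vhat hV0 hVm N s a
end

section
/- Let S, A be finite nonempty sets, f : S × A → S a deterministic model, γ ∈ (0,1], L̂ : S × A → ℝ a stage cost, and π̂ : S → A its one-step-optimal (greedy) policy in the sense that for all s, the modified problem's value is attained at π̂. Consider a cost modification Λ : S × A → ℝ satisfying Λ(s,a) ≥ Λ(s, π̂(s)) for all s, a, and define L̄(s,a) = L̂(s,a) + Λ(s,a) − γ Λ(f(s,a), π̂(f(s,a))). If Q̂ : S × A → ℝ and V̂ : S → ℝ satisfy the Bellman relations Q̂(s,a) = L̂(s,a) + γ V̂(f(s,a)), V̂(s) = Q̂(s, π̂(s)) = min_a Q̂(s,a), then Q̄(s,a) := Q̂(s,a) + Λ(s,a) and V̄(s) := V̂(s) + Λ(s, π̂(s)) satisfy Q̄(s,a) = L̄(s,a) + γ V̄(f(s,a)) and V̄(s) = min_a Q̄(s,a) = Q̄(s, π̂(s)) for all s, a. In particular, π̂ is also greedy for Q̄. -/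
/-! A rotation adds `Λ s a` to every action value and `Λ s (πhat s)` to every state value, so
the Bellman identity survives because the term `γ * Λ (f s a) (πhat (f s a))` put into the
modified cost cancels the shift of the successor value. Greediness survives because `πhat s`
minimises both `Qhat s ·` and `Λ s ·`, hence their sum. -/

theorem ciInf_eq_of_forall_apply_le {ι α : Type*} [ConditionallyCompleteLattice α]
    {g : ι → α} {i₀ : ι} (h : ∀ i, g i₀ ≤ g i) : ⨅ i, g i = g i₀ :=
  IsLeast.csInf_eq ⟨⟨i₀, rfl⟩, Set.forall_mem_range.2 h⟩

theorem le_of_eq_ciInf {ι : Type*} [Finite ι] {g : ι → ℝ} {v : ℝ} (hv : v = ⨅ i, g i)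
    (i : ι) : v ≤ g i :=
  hv ▸ ciInf_le (Finite.bddBelow_range g) i

section Rotation

variable {S A : Type} {f : S → A → S} {γ : ℝ} {πhat : S → A} {Λ Lhat Lbar Qhat Qbar : S → A → ℝ}
  {Vhat Vbar : S → ℝ}

theorem rotated_bellman_eq
    (hLbar : ∀ s a, Lbar s a = Lhat s a + Λ s a - γ * Λ (f s a) (πhat (f s a)))
    (hBellmanQ : ∀ s a, Qhat s a = Lhat s a + γ * Vhat (f s a))
    (hQbar : ∀ s a, Qbar s a = Qhat s a + Λ s a)
    (hVbar : ∀ s, Vbar s = Vhat s + Λ s (πhat s)) (s : S) (a : A) :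
    Qbar s a = Lbar s a + γ * Vbar (f s a) := by
  rw [hQbar, hLbar, hVbar, hBellmanQ]
  ring

theorem rotated_policy_le (hΛ : ∀ s a, Λ s (πhat s) ≤ Λ s a)
    (hQhat : ∀ s a, Qhat s (πhat s) ≤ Qhat s a)
    (hQbar : ∀ s a, Qbar s a = Qhat s a + Λ s a) (s : S) (a : A) :
    Qbar s (πhat s) ≤ Qbar s a := by
  rw [hQbar, hQbar]
  exact add_le_add (hQhat s a) (hΛ s a)

end Rotation

theorem generalized_cost_rotation_preserves_policy_general
    {S A : Type} [Fintype A]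
    (f : S → A → S) (γ : ℝ)
    (Lhat : S → A → ℝ) (πhat : S → A)
    (Λ : S → A → ℝ) (hΛ : ∀ s a, Λ s (πhat s) ≤ Λ s a)
    (Lbar : S → A → ℝ)
    (hLbar : ∀ s a, Lbar s a = Lhat s a + Λ s a - γ * Λ (f s a) (πhat (f s a)))
    (Qhat : S → A → ℝ) (Vhat : S → ℝ)
    (hBellmanQ : ∀ s a, Qhat s a = Lhat s a + γ * Vhat (f s a))
    (hBellmanV : ∀ s, Vhat s = Qhat s (πhat s))
    (hGreedy : ∀ s, Vhat s = ⨅ a, Qhat s a)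
    (Qbar : S → A → ℝ) (Vbar : S → ℝ)
    (hQbar : ∀ s a, Qbar s a = Qhat s a + Λ s a)
    (hVbar : ∀ s, Vbar s = Vhat s + Λ s (πhat s)) :
    (∀ s a, Qbar s a = Lbar s a + γ * Vbar (f s a)) ∧
    (∀ s, Vbar s = ⨅ a, Qbar s a) ∧
    (∀ s, Vbar s = Qbar s (πhat s)) := by
  have hQhat (s : S) (a : A) : Qhat s (πhat s) ≤ Qhat s a :=
    hBellmanV s ▸ le_of_eq_ciInf (hGreedy s) a
  have hVbar_policy (s : S) : Vbar s = Qbar s (πhat s) := by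
    rw [hVbar, hQbar, hBellmanV]
  refine ⟨rotated_bellman_eq hLbar hBellmanQ hQbar hVbar, fun s => ?_, hVbar_policy⟩
  rw [hVbar_policy, ciInf_eq_of_forall_apply_le (rotated_policy_le hΛ hQhat hQbar s)]

theorem generalized_cost_rotation_preserves_policy
    {S A : Type} [Fintype S] [Fintype A] [Nonempty S] [Nonempty A]
    (f : S → A → S) (γ : ℝ) (hγ : 0 < γ) (hγ1 : γ ≤ 1)
    (Lhat : S → A → ℝ) (πhat : S → A)
    (Λ : S → A → ℝ) (hΛ : ∀ s a, Λ s (πhat s) ≤ Λ s a)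
    (Lbar : S → A → ℝ)
    (hLbar : ∀ s a, Lbar s a = Lhat s a + Λ s a - γ * Λ (f s a) (πhat (f s a)))
    (Qhat : S → A → ℝ) (Vhat : S → ℝ)
    (hBellmanQ : ∀ s a, Qhat s a = Lhat s a + γ * Vhat (f s a))
    (hBellmanV : ∀ s, Vhat s = Qhat s (πhat s))
    (hGreedy : ∀ s, Vhat s = ⨅ a, Qhat s a)
    (Qbar : S → A → ℝ) (Vbar : S → ℝ)
    (hQbar : ∀ s a, Qbar s a = Qhat s a + Λ s a)
    (hVbar : ∀ s, Vbar s = Vhat s + Λ s (πhat s)) :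
    (∀ s a, Qbar s a = Lbar s a + γ * Vbar (f s a)) ∧
    (∀ s, Vbar s = ⨅ a, Qbar s a) ∧
    (∀ s, Vbar s = Qbar s (πhat s)) :=
  generalized_cost_rotation_preserves_policy_general f γ Lhat πhat Λ hΛ Lbar hLbar Qhat Vhat
    hBellmanQ hBellmanV hGreedy Qbar Vbar hQbar hVbar
end
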